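/- arXiv:0907.0354 — 6 statements merged into one kernel-verified Lean document; each statement's English description precedes it below -/
import Mathlib

section
/- Let α : M → ℝ be a smooth function and define f : M → M by f(x) = Φ(x, α(x)). Then for every x ∈ M, the differential of f at x sends F(x) to (1 + dα_x(F(x))) · F(f(x)), where dα_x(F(x)) denotes the derivative of α along F at x. In particular, if f is a diffeomorphism (or a germ of diffeomorphism at a point z), then the pushforward vector field satisfies f_* F = (1 + F(α)) · F, i.e. f_* F is a reparametrization of F. -/
/-!
The differential of `y ↦ Φ y (α y)` splits into a spatial part `dΦ_{α x}(F x)` and a temporal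
part `dα(F x) • ∂ₜΦ = dα(F x) • F`. The spatial part is `F (Φ x (α x))` because each time-`t` map
preserves the generator of its flow: the curves `s ↦ Φ (Φ x s) t` and `s ↦ Φ (Φ x t) s` coincide,
and differentiating both at `s = 0` gives `dΦ_t(F x) = F (Φ x t)`.
-/

open scoped Manifold

section

variable {E : Type*} [NormedAddCommGroup E] [NormedSpace ℝ E]
  {H : Type*} [TopologicalSpace H] {I : ModelWithCorners ℝ E H}
  {M : Type*} [TopologicalSpace M] [ChartedSpace H M]

theorem mfderiv_graph_apply {α : M → ℝ} {x : M} (hα : MDifferentiableAt I 𝓘(ℝ, ℝ) α x)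
    (v : TangentSpace I x) :
    mfderiv I (I.prod 𝓘(ℝ, ℝ)) (fun y => (y, α y)) x v =
      ((v, mfderiv I 𝓘(ℝ, ℝ) α x v) : TangentSpace (I.prod 𝓘(ℝ, ℝ)) (x, α x)) := by
  rw [show (fun y => (y, α y)) = fun y => (id y, α y) from rfl,
    mfderiv_prodMk mdifferentiableAt_id hα, mfderiv_id]
  rfl

theorem mfderiv_comp_prodMk_apply
    {E' : Type*} [NormedAddCommGroup E'] [NormedSpace ℝ E']
    {H' : Type*} [TopologicalSpace H'] {J : ModelWithCorners ℝ E' H'}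
    {N : Type*} [TopologicalSpace N] [ChartedSpace H' N]
    {G : M → ℝ → N} {α : M → ℝ} {x : M}
    (hG : MDifferentiableAt (I.prod 𝓘(ℝ, ℝ)) J (fun p : M × ℝ => G p.1 p.2) (x, α x))
    (hα : MDifferentiableAt I 𝓘(ℝ, ℝ) α x) (v : TangentSpace I x) :
    mfderiv I J (fun y => G y (α y)) x v =
      mfderiv I J (G · (α x)) x v +
        (show ℝ from mfderiv I 𝓘(ℝ, ℝ) α x v) • mfderiv 𝓘(ℝ, ℝ) J (G x) (α x) 1 := by
  have hscalar : mfderiv 𝓘(ℝ, ℝ) J (G x) (α x) (mfderiv I 𝓘(ℝ, ℝ) α x v) =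
      (show ℝ from mfderiv I 𝓘(ℝ, ℝ) α x v) • mfderiv 𝓘(ℝ, ℝ) J (G x) (α x) 1 := by
    rw [← ContinuousLinearMap.map_smul]
    congr 1
    exact (mul_one (_ : ℝ)).symm
  rw [← hscalar]
  calc mfderiv I J (fun y => G y (α y)) x v
      = mfderiv (I.prod 𝓘(ℝ, ℝ)) J (fun p : M × ℝ => G p.1 p.2) (x, α x)
          (mfderiv I (I.prod 𝓘(ℝ, ℝ)) (fun y => (y, α y)) x v) :=
        mfderiv_comp_apply (f := fun y => (y, α y)) (g := fun p : M × ℝ => G p.1 p.2) x hG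
          (mdifferentiableAt_id.prodMk hα) v
    _ = _ := by rw [mfderiv_graph_apply hα]; exact mfderiv_prod_eq_add_apply hG

variable {F : (x : M) → TangentSpace I x} {Φ : M → ℝ → M}

theorem mfderiv_flow_apply_vectorField
    (hΦ : MDifferentiable (I.prod 𝓘(ℝ, ℝ)) I (fun p : M × ℝ => Φ p.1 p.2))
    (hΦ_zero : ∀ x, Φ x 0 = x) (hΦ_add : ∀ x t s, Φ (Φ x t) s = Φ x (t + s))
    (hΦ_deriv : ∀ x t, mfderiv 𝓘(ℝ, ℝ) I (Φ x) t 1 = F (Φ x t)) (x : M) (t : ℝ) :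
    mfderiv I I (Φ · t) x (F x) = F (Φ x t) := by
  have hcomm : (Φ · t) ∘ Φ x = Φ (Φ x t) := by
    funext s
    simp only [Function.comp_apply, hΦ_add, add_comm]
  have hΦ_left : MDifferentiableAt I I (Φ · t) x :=
    (hΦ _).comp x (mdifferentiableAt_id.prodMk mdifferentiableAt_const)
  have hΦ_right : MDifferentiableAt 𝓘(ℝ, ℝ) I (Φ x) 0 :=
    (hΦ _).comp (0 : ℝ) (mdifferentiableAt_const.prodMk mdifferentiableAt_id)
  have hcurve : mfderiv I I (Φ · t) x (F x) =
      mfderiv I I (Φ · t) x (mfderiv 𝓘(ℝ, ℝ) I (Φ x) 0 1) := by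
    rw [hΦ_deriv, hΦ_zero]
  have hchain := mfderiv_comp_apply_of_eq 0 hΦ_left hΦ_right (hΦ_zero x) (1 : ℝ)
  have htranslate : mfderiv 𝓘(ℝ, ℝ) I ((Φ · t) ∘ Φ x) 0 1 = F (Φ x t) := by
    rw [hcomm, hΦ_deriv, hΦ_zero]
  exact hcurve.trans (hchain.symm.trans htranslate)

theorem mfderiv_shift_apply_vectorField
    (hΦ : MDifferentiable (I.prod 𝓘(ℝ, ℝ)) I (fun p : M × ℝ => Φ p.1 p.2))
    (hΦ_zero : ∀ x, Φ x 0 = x) (hΦ_add : ∀ x t s, Φ (Φ x t) s = Φ x (t + s))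
    (hΦ_deriv : ∀ x t, mfderiv 𝓘(ℝ, ℝ) I (Φ x) t 1 = F (Φ x t))
    {α : M → ℝ} {x : M} (hα : MDifferentiableAt I 𝓘(ℝ, ℝ) α x) :
    mfderiv I I (fun y => Φ y (α y)) x (F x) =
      ((1 : ℝ) + (show ℝ from mfderiv I 𝓘(ℝ, ℝ) α x (F x))) • F (Φ x (α x)) := by
  rw [mfderiv_comp_prodMk_apply (hΦ _) hα,
    mfderiv_flow_apply_vectorField hΦ hΦ_zero hΦ_add hΦ_deriv, hΦ_deriv, add_smul, one_smul]

end

theorem pushforward_of_shift_is_reparametrization_general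
    {E : Type*} [NormedAddCommGroup E] [NormedSpace ℝ E]
    {H : Type*} [TopologicalSpace H] {I : ModelWithCorners ℝ E H}
    {M : Type*} [TopologicalSpace M] [ChartedSpace H M]
    -- the smooth vector field `F`
    (F : (x : M) → TangentSpace I x)
    -- `Φ` is the global flow of `F`
    (Φ : M → ℝ → M)
    (hΦ_smooth : ContMDiff (I.prod 𝓘(ℝ, ℝ)) I (⊤ : ℕ∞) (fun p : M × ℝ => Φ p.1 p.2))
    (hΦ_zero : ∀ x, Φ x 0 = x)
    (hΦ_add : ∀ x t s, Φ (Φ x t) s = Φ x (t + s))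
    (hΦ_deriv : ∀ x t, mfderiv 𝓘(ℝ, ℝ) I (Φ x) t (1 : ℝ) = F (Φ x t))
    -- a smooth function `α` and the shift map `f` it defines
    (α : M → ℝ) (hα : ContMDiff I 𝓘(ℝ, ℝ) (⊤ : ℕ∞) α)
    (f : M → M) (hf : ∀ x, f x = Φ x (α x)) :
    -- the differential of `f` at `x` sends `F x` to `(1 + dα_x(F x)) • F (f x)`
    (∀ x : M, mfderiv I I f x (F x) =
        ((1 : ℝ) + (show ℝ from mfderiv I 𝓘(ℝ, ℝ) α x (F x))) • F (f x)) ∧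
    -- in particular, if `f` is a diffeomorphism with inverse `g`, then
    -- `(f_* F)(y) = (1 + F(α))(f⁻¹ y) • F(y)`, a reparametrization of `F`
    (∀ g : M → M, Function.LeftInverse g f → Function.RightInverse g f →
      ∀ y : M, mfderiv I I f (g y) (F (g y)) =
        ((1 : ℝ) + (show ℝ from mfderiv I 𝓘(ℝ, ℝ) α (g y) (F (g y)))) • F y) := by
  obtain rfl : f = fun y => Φ y (α y) := funext hf
  have hshift := fun x => mfderiv_shift_apply_vectorField (F := F)
    (hΦ_smooth.mdifferentiable (by simp)) hΦ_zero hΦ_add hΦ_deriv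
    (hα.mdifferentiable (by simp) x)
  refine ⟨hshift, fun g _ hgf y => ?_⟩
  rw [hshift (g y), show Φ (g y) (α (g y)) = y from hgf y]

/-- Let `α : M → ℝ` be smooth and `f(x) = Φ(x, α(x))`.  Then for every
`x`, the differential of `f` at `x` sends `F(x)` to `(1 + dα_x(F(x))) • F(f(x))`.
In particular, if `f` is a diffeomorphism with inverse `g`, then the pushforward vector
field satisfies `f_* F = (1 + F(α)) • F`, i.e. `f_* F` is a reparametrization of `F`. -/
theorem pushforward_of_shift_is_reparametrization
    {E : Type*} [NormedAddCommGroup E] [NormedSpace ℝ E] [FiniteDimensional ℝ E]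
    {H : Type*} [TopologicalSpace H] {I : ModelWithCorners ℝ E H}
    {M : Type*} [TopologicalSpace M] [ChartedSpace H M] [IsManifold I (⊤ : ℕ∞) M]
    -- the smooth vector field `F`
    (F : (x : M) → TangentSpace I x)
    (hF : ContMDiff I I.tangent (⊤ : ℕ∞) (fun x => (⟨x, F x⟩ : TangentBundle I M)))
    -- `Φ` is the global flow of `F`
    (Φ : M → ℝ → M)
    (hΦ_smooth : ContMDiff (I.prod 𝓘(ℝ, ℝ)) I (⊤ : ℕ∞) (fun p : M × ℝ => Φ p.1 p.2))
    (hΦ_zero : ∀ x, Φ x 0 = x)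
    (hΦ_add : ∀ x t s, Φ (Φ x t) s = Φ x (t + s))
    (hΦ_deriv : ∀ x t, mfderiv 𝓘(ℝ, ℝ) I (Φ x) t (1 : ℝ) = F (Φ x t))
    -- a smooth function `α` and the shift map `f` it defines
    (α : M → ℝ) (hα : ContMDiff I 𝓘(ℝ, ℝ) (⊤ : ℕ∞) α)
    (f : M → M) (hf : ∀ x, f x = Φ x (α x)) :
    -- the differential of `f` at `x` sends `F x` to `(1 + dα_x(F x)) • F (f x)`
    (∀ x : M, mfderiv I I f x (F x) =
        ((1 : ℝ) + (show ℝ from mfderiv I 𝓘(ℝ, ℝ) α x (F x))) • F (f x)) ∧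
    -- in particular, if `f` is a diffeomorphism with inverse `g`, then
    -- `(f_* F)(y) = (1 + F(α))(f⁻¹ y) • F(y)`, a reparametrization of `F`
    (∀ g : M → M, Function.LeftInverse g f → Function.RightInverse g f →
      ∀ y : M, mfderiv I I f (g y) (F (g y)) =
        ((1 : ℝ) + (show ℝ from mfderiv I 𝓘(ℝ, ℝ) α (g y) (F (g y)))) • F y) :=
  pushforward_of_shift_is_reparametrization_general F Φ hΦ_smooth hΦ_zero hΦ_add hΦ_deriv α hα f hf
end

section
/- Let α : M → ℝ be a smooth function such that f(x) = Φ(x, α(x)) defines a diffeomorphism f of M. Then the shift set of the pushforward field f_* F equals the shift set of F; concretely, since the global flow of f_* F is t ↦ f ∘ Φ_t ∘ f⁻¹, the set of maps { y ↦ f(Φ(f⁻¹(y), β(y))) : β ∈ C^∞(M,ℝ) } coincides with Sh(F). -/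
/-!
Shift maps `x ↦ Φ x (α x)` compose to shift maps because `Φ` is a flow, and a right inverse of a
shift map is again a shift map, so the smooth shift maps form a set closed under composition which
contains both `f` and `g = f⁻¹`. Conjugating by `f` therefore maps `Sh(F)` onto itself, and the
shift set of `f_* F` is exactly this conjugate `f ∘ Sh(F) ∘ f⁻¹`.
-/

open scoped Manifold

section Shift

variable {M G : Type*} [AddGroup G] {Φ : M → G → M}

def shiftMap (Φ : M → G → M) (α : M → G) : M → M := fun x => Φ x (α x)

theorem shiftMap_comp_shiftMap (hΦ_add : ∀ x t s, Φ (Φ x t) s = Φ x (t + s)) (α β : M → G) :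
    shiftMap Φ β ∘ shiftMap Φ α = shiftMap Φ (fun x => α x + β (shiftMap Φ α x)) :=
  funext fun x => hΦ_add x (α x) (β (shiftMap Φ α x))

theorem eq_shiftMap_neg_of_rightInverse (hΦ_zero : ∀ x, Φ x 0 = x)
    (hΦ_add : ∀ x t s, Φ (Φ x t) s = Φ x (t + s)) {α : M → G} {g : M → M}
    (hg : Function.RightInverse g (shiftMap Φ α)) :
    g = shiftMap Φ (fun y => -α (g y)) := by
  funext y
  calc g y = Φ (g y) (α (g y) + -α (g y)) := by rw [add_neg_cancel, hΦ_zero]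
    _ = Φ (shiftMap Φ α (g y)) (-α (g y)) := (hΦ_add _ _ _).symm
    _ = shiftMap Φ (fun y => -α (g y)) y := by rw [hg y]; rfl

end Shift

section Smooth

variable {E : Type*} [NormedAddCommGroup E] [NormedSpace ℝ E]
  {H : Type*} [TopologicalSpace H] {I : ModelWithCorners ℝ E H}
  {M : Type*} [TopologicalSpace M] [ChartedSpace H M] {n : WithTop ℕ∞} {Φ : M → ℝ → M}

variable (I n Φ) in
def shiftSet : Set (M → M) :=
  {h | ∃ α : M → ℝ, ContMDiff I 𝓘(ℝ, ℝ) n α ∧ h = shiftMap Φ α}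

theorem contMDiff_shiftMap (hΦ : ContMDiff (I.prod 𝓘(ℝ, ℝ)) I n (fun p : M × ℝ => Φ p.1 p.2))
    {α : M → ℝ} (hα : ContMDiff I 𝓘(ℝ, ℝ) n α) : ContMDiff I I n (shiftMap Φ α) :=
  hΦ.comp (contMDiff_id.prodMk hα)

theorem shiftMap_mem_shiftSet {α : M → ℝ} (hα : ContMDiff I 𝓘(ℝ, ℝ) n α) :
    shiftMap Φ α ∈ shiftSet I n Φ :=
  ⟨α, hα, rfl⟩

theorem comp_mem_shiftSet (hΦ : ContMDiff (I.prod 𝓘(ℝ, ℝ)) I n (fun p : M × ℝ => Φ p.1 p.2))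
    (hΦ_add : ∀ x t s, Φ (Φ x t) s = Φ x (t + s)) {h k : M → M}
    (hh : h ∈ shiftSet I n Φ) (hk : k ∈ shiftSet I n Φ) : h ∘ k ∈ shiftSet I n Φ := by
  obtain ⟨β, hβ, rfl⟩ := hh
  obtain ⟨α, hα, rfl⟩ := hk
  rw [shiftMap_comp_shiftMap hΦ_add]
  exact shiftMap_mem_shiftSet (hα.add (hβ.comp (contMDiff_shiftMap hΦ hα)))

theorem image_conj_shiftSet (hΦ : ContMDiff (I.prod 𝓘(ℝ, ℝ)) I n (fun p : M × ℝ => Φ p.1 p.2))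
    (hΦ_add : ∀ x t s, Φ (Φ x t) s = Φ x (t + s)) {f g : M → M}
    (hf : f ∈ shiftSet I n Φ) (hg : g ∈ shiftSet I n Φ) (hfg : Function.RightInverse g f) :
    (fun k => f ∘ k ∘ g) '' shiftSet I n Φ = shiftSet I n Φ := by
  have mem_conj {k} (hk : k ∈ shiftSet I n Φ) : f ∘ k ∘ g ∈ shiftSet I n Φ :=
    comp_mem_shiftSet hΦ hΦ_add hf (comp_mem_shiftSet hΦ hΦ_add hk hg)
  refine subset_antisymm (Set.image_subset_iff.2 fun k => mem_conj) fun h hh => ?_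
  refine ⟨g ∘ h ∘ f, comp_mem_shiftSet hΦ hΦ_add hg (comp_mem_shiftSet hΦ hΦ_add hh hf), ?_⟩
  funext y
  simp only [Function.comp_apply, hfg _]

end Smooth

theorem shift_set_of_pushforward_eq_general
    {E : Type*} [NormedAddCommGroup E] [NormedSpace ℝ E]
    {H : Type*} [TopologicalSpace H] {I : ModelWithCorners ℝ E H}
    {M : Type*} [TopologicalSpace M] [ChartedSpace H M]
    -- `Φ` is the global flow of `F`
    (Φ : M → ℝ → M)
    (hΦ_smooth : ContMDiff (I.prod 𝓘(ℝ, ℝ)) I (⊤ : ℕ∞) (fun p : M × ℝ => Φ p.1 p.2))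
    (hΦ_zero : ∀ x, Φ x 0 = x)
    (hΦ_add : ∀ x t s, Φ (Φ x t) s = Φ x (t + s))
    -- a smooth function `α` whose shift map `f` is a diffeomorphism with inverse `g`
    (α : M → ℝ) (hα : ContMDiff I 𝓘(ℝ, ℝ) (⊤ : ℕ∞) α)
    (f : M → M) (hf : ∀ x, f x = Φ x (α x))
    (g : M → M) (hg : ContMDiff I I (⊤ : ℕ∞) g)
    (hfg : Function.RightInverse g f) :
    {h : M → M | ∃ β : M → ℝ, ContMDiff I 𝓘(ℝ, ℝ) (⊤ : ℕ∞) β ∧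
        h = fun y => f (Φ (g y) (β y))} =
      {h : M → M | ∃ δ : M → ℝ, ContMDiff I 𝓘(ℝ, ℝ) (⊤ : ℕ∞) δ ∧
        h = fun x => Φ x (δ x)} := by
  obtain rfl : f = shiftMap Φ α := funext hf
  have hg_mem : g ∈ shiftSet I (⊤ : ℕ∞) Φ :=
    ⟨_, (hα.comp hg).neg, eq_shiftMap_neg_of_rightInverse hΦ_zero hΦ_add hfg⟩
  change _ = shiftSet I (⊤ : ℕ∞) Φ
  rw [← image_conj_shiftSet hΦ_smooth hΦ_add (shiftMap_mem_shiftSet hα) hg_mem hfg]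
  ext h
  constructor
  · rintro ⟨β, hβ, rfl⟩
    refine ⟨shiftMap Φ (β ∘ shiftMap Φ α), ⟨_, hβ.comp (contMDiff_shiftMap hΦ_smooth hα), rfl⟩, ?_⟩
    funext y
    change shiftMap Φ α (Φ (g y) (β (shiftMap Φ α (g y)))) = _
    rw [hfg y]
  · rintro ⟨_, ⟨γ, hγ, rfl⟩, rfl⟩
    exact ⟨γ ∘ g, hγ.comp hg, rfl⟩

/-- Let `α : M → ℝ` be smooth such that `f(x) = Φ(x, α(x))` is a
diffeomorphism of `M` (with smooth inverse `g`).  The global flow of the pushforward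
field `f_* F` is `t ↦ f ∘ Φ_t ∘ f⁻¹`, so the shift set of `f_* F` is
`{ y ↦ f (Φ (f⁻¹ y) (β y)) : β ∈ C^∞(M,ℝ) }`; this set coincides with `Sh(F)`. -/
theorem shift_set_of_pushforward_eq
    {E : Type*} [NormedAddCommGroup E] [NormedSpace ℝ E] [FiniteDimensional ℝ E]
    {H : Type*} [TopologicalSpace H] {I : ModelWithCorners ℝ E H}
    {M : Type*} [TopologicalSpace M] [ChartedSpace H M] [IsManifold I (⊤ : ℕ∞) M]
    -- the smooth vector field `F`
    (F : (x : M) → TangentSpace I x)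
    (hF : ContMDiff I I.tangent (⊤ : ℕ∞) (fun x => (⟨x, F x⟩ : TangentBundle I M)))
    -- `Φ` is the global flow of `F`
    (Φ : M → ℝ → M)
    (hΦ_smooth : ContMDiff (I.prod 𝓘(ℝ, ℝ)) I (⊤ : ℕ∞) (fun p : M × ℝ => Φ p.1 p.2))
    (hΦ_zero : ∀ x, Φ x 0 = x)
    (hΦ_add : ∀ x t s, Φ (Φ x t) s = Φ x (t + s))
    (hΦ_deriv : ∀ x t, mfderiv 𝓘(ℝ, ℝ) I (Φ x) t (1 : ℝ) = F (Φ x t))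
    -- a smooth function `α` whose shift map `f` is a diffeomorphism with inverse `g`
    (α : M → ℝ) (hα : ContMDiff I 𝓘(ℝ, ℝ) (⊤ : ℕ∞) α)
    (f : M → M) (hf : ∀ x, f x = Φ x (α x))
    (g : M → M) (hg : ContMDiff I I (⊤ : ℕ∞) g)
    (hgf : Function.LeftInverse g f) (hfg : Function.RightInverse g f) :
    {h : M → M | ∃ β : M → ℝ, ContMDiff I 𝓘(ℝ, ℝ) (⊤ : ℕ∞) β ∧
        h = fun y => f (Φ (g y) (β y))} =
      {h : M → M | ∃ δ : M → ℝ, ContMDiff I 𝓘(ℝ, ℝ) (⊤ : ℕ∞) δ ∧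
        h = fun x => Φ x (δ x)} :=
  shift_set_of_pushforward_eq_general Φ hΦ_smooth hΦ_zero hΦ_add α hα f hf g hg hfg
end

section
/- Let θ : M → (0,∞) be a smooth strictly positive function that is constant along orbits of F, i.e. θ(Φ(x,t)) = θ(x) for all x ∈ M, t ∈ ℝ, and suppose the vector field θF is complete with global flow Ψ. Then the following are equivalent: (a) Ψ(x,1) = x for all x ∈ M (i.e. θF yields a smooth circle action on M); (b) Φ(x, θ(x)) = x for all x ∈ M. -/
open scoped Manifold

/-! The curve `s ↦ Φ (Ψ x s) (θ x * (t - s))` has zero velocity: along it the two flows cancel,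
because the flow maps of `Φ` preserve `F` and `θ` is constant along the orbits of `Ψ` (its
derivative in the direction of `F` vanishes). A curve with zero velocity is constant, even on a
non-Hausdorff manifold, so `Ψ x t = Φ x (θ x * t)`; at `t = 1` the two conditions coincide. -/

section

variable {E : Type*} [NormedAddCommGroup E] [NormedSpace ℝ E]
  {H : Type*} [TopologicalSpace H] {I : ModelWithCorners ℝ E H}
  {M : Type*} [TopologicalSpace M] [ChartedSpace H M]
  {E' : Type*} [NormedAddCommGroup E'] [NormedSpace ℝ E']
  {H' : Type*} [TopologicalSpace H'] {I' : ModelWithCorners ℝ E' H'}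
  {M' : Type*} [TopologicalSpace M'] [ChartedSpace H' M']

theorem isLocallyConstant_of_hasMFDerivAt_zero [IsManifold I 1 M]
    {V : Type*} [NormedAddCommGroup V] [NormedSpace ℝ V] {c : V → M}
    (hc : ∀ t, HasMFDerivAt 𝓘(ℝ, V) I c t 0) : IsLocallyConstant c := by
  refine (IsLocallyConstant.iff_eventually_eq c).2 fun t₀ => ?_
  set φ := extChartAt I (c t₀)
  have hcont : Continuous c := continuous_iff_continuousAt.2 fun t => (hc t).continuousAt
  set U := c ⁻¹' (chartAt H (c t₀)).source
  have hU : IsOpen U := (chartAt H (c t₀)).open_source.preimage hcont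
  have hφc : ∀ t ∈ U, HasFDerivAt (φ ∘ c) (0 : V →L[ℝ] E) t := fun t ht => by
    have := ((hasMFDerivAt_extChartAt (I := I) ht).comp t (hc t)).congr_mfderiv
      (ContinuousLinearMap.comp_zero _)
    exact hasMFDerivAt_iff_hasFDerivAt.1 this
  have hV : IsOpen (U ∩ (φ ∘ c) ⁻¹' {φ (c t₀)}) :=
    hU.isOpen_inter_preimage_of_fderiv_eq_zero
      (fun t ht => (hφc t ht).differentiableAt.differentiableWithinAt)
      (fun t ht => (hφc t ht).fderiv) _
  filter_upwards [hV.mem_nhds ⟨mem_chart_source H (c t₀), rfl⟩] with t ⟨ht, hφt⟩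
  exact φ.injOn (by simpa [φ, U] using ht) (by simp [φ]) hφt

theorem isMIntegralCurve_of_mfderiv_apply_one {Φ : M → ℝ → M} {v : (x : M) → TangentSpace I x}
    (hΦ : MDifferentiable (I.prod 𝓘(ℝ, ℝ)) I (fun p : M × ℝ => Φ p.1 p.2))
    (h : ∀ x t, mfderiv 𝓘(ℝ, ℝ) I (Φ x) t 1 = v (Φ x t)) (x : M) :
    IsMIntegralCurve (Φ x) v := fun t =>
  ((hΦ (x, t)).comp t (mdifferentiableAt_const.prodMk mdifferentiableAt_id)).hasMFDerivAt
    |>.congr_mfderiv <| ContinuousLinearMap.ext_ring <| (h x t).trans (one_smul ℝ _).symm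

theorem HasMFDerivAt.eq_of_smulRight_one {γ : ℝ → M} {t : ℝ} {v w : TangentSpace I (γ t)}
    (hv : HasMFDerivAt 𝓘(ℝ, ℝ) I γ t ((1 : ℝ →L[ℝ] ℝ).smulRight v))
    (hw : HasMFDerivAt 𝓘(ℝ, ℝ) I γ t ((1 : ℝ →L[ℝ] ℝ).smulRight w)) : v = w :=
  (one_smul ℝ v).symm.trans <|
    (DFunLike.congr_fun (hv.mfderiv.symm.trans hw.mfderiv) 1).trans (one_smul ℝ w)

theorem IsMIntegralCurve.hasMFDerivAt_comp {γ : ℝ → M} {v : (x : M) → TangentSpace I x}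
    (hγ : IsMIntegralCurve γ v) {g : M → M'} {t : ℝ} (hg : MDifferentiableAt I I' g (γ t)) :
    HasMFDerivAt 𝓘(ℝ, ℝ) I' (g ∘ γ) t
      ((1 : ℝ →L[ℝ] ℝ).smulRight (mfderiv I I' g (γ t) (v (γ t)))) :=
  (hg.hasMFDerivAt.comp t (hγ t)).congr_mfderiv <| ContinuousLinearMap.ext_ring <|
    (mfderiv I I' g (γ t)).map_smul (1 : ℝ) (v (γ t))

theorem IsMIntegralCurve.apply_comp_eq_of_mfderiv_eq_zero [IsManifold I' 1 M']
    {γ : ℝ → M} {v : (x : M) → TangentSpace I x} (hγ : IsMIntegralCurve γ v)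
    {g : M → M'} (hg : MDifferentiable I I' g) (hgv : ∀ x, mfderiv I I' g x (v x) = 0)
    (s t : ℝ) : g (γ s) = g (γ t) := by
  have hgγ : ∀ t, HasMFDerivAt 𝓘(ℝ, ℝ) I' (g ∘ γ) t 0 := fun t =>
    (hγ.hasMFDerivAt_comp (hg (γ t))).congr_mfderiv <| by
      rw [hgv]; exact ContinuousLinearMap.smulRight_zero _
  exact (isLocallyConstant_of_hasMFDerivAt_zero hgγ).apply_eq_of_preconnectedSpace s t

structure IsGlobalFlow (I : ModelWithCorners ℝ E H) (F : (x : M) → TangentSpace I x)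
    (Φ : M → ℝ → M) : Prop where
  mdifferentiable : MDifferentiable (I.prod 𝓘(ℝ, ℝ)) I (fun p : M × ℝ => Φ p.1 p.2)
  apply_zero : ∀ x, Φ x 0 = x
  apply_apply : ∀ x t s, Φ (Φ x t) s = Φ x (t + s)
  isMIntegralCurve : ∀ x, IsMIntegralCurve (Φ x) F

namespace IsGlobalFlow

variable {F : (x : M) → TangentSpace I x} {Φ : M → ℝ → M}

theorem mdifferentiableAt_apply_left (hΦ : IsGlobalFlow I F Φ) (x : M) (s : ℝ) :
    MDifferentiableAt I I (Φ · s) x :=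
  (hΦ.mdifferentiable (x, s)).comp x (mdifferentiableAt_id.prodMk mdifferentiableAt_const)

theorem mfderiv_apply_left_apply (hΦ : IsGlobalFlow I F Φ) (x : M) (s : ℝ) :
    mfderiv I I (Φ · s) x (F x) = F (Φ x s) := by
  have h₁ := (hΦ.isMIntegralCurve x).hasMFDerivAt_comp (t := 0)
    (hΦ.apply_zero x ▸ hΦ.mdifferentiableAt_apply_left x s)
  have h₂ := (hΦ.isMIntegralCurve x).comp_add s 0
  have : (Φ · s) ∘ Φ x = Φ x ∘ (· + s) := funext fun t => hΦ.apply_apply x t s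
  rw [this] at h₁
  have h := h₁.eq_of_smulRight_one h₂
  rw [hΦ.apply_zero] at h
  rw [h, Function.comp_apply, zero_add]

theorem mfderiv_apply_eq_zero_of_apply_eq (hΦ : IsGlobalFlow I F Φ) {g : M → M'} {x : M} (hg : MDifferentiableAt I I' g x)
    (hgΦ : ∀ t, g (Φ x t) = g x) :
    mfderiv I I' g x (F x) = 0 := by
  have h := ((hΦ.isMIntegralCurve x).hasMFDerivAt_comp (t := 0) (hΦ.apply_zero x ▸ hg)).mfderiv
  rw [show g ∘ Φ x = fun _ => g x from funext hgΦ, mfderiv_const, hΦ.apply_zero] at h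
  exact ((DFunLike.congr_fun h 1).trans (one_smul ℝ _)).symm

theorem mfderiv_apply_right_apply (hΦ : IsGlobalFlow I F Φ) (x : M) (s r : ℝ) :
    mfderiv 𝓘(ℝ, ℝ) I (Φ x) s r = r • F (Φ x s) := by
  rw [(hΦ.isMIntegralCurve x s).mfderiv]
  rfl

theorem hasMFDerivAt_apply_comp (hΦ : IsGlobalFlow I F Φ) {α : ℝ → M} {β : ℝ → ℝ} {t a b : ℝ}
    (hα : HasMFDerivAt 𝓘(ℝ, ℝ) I α t ((1 : ℝ →L[ℝ] ℝ).smulRight (a • F (α t))))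
    (hβ : HasDerivAt β b t) :
    HasMFDerivAt 𝓘(ℝ, ℝ) I (fun t => Φ (α t) (β t)) t
      ((1 : ℝ →L[ℝ] ℝ).smulRight ((a + b) • F (Φ (α t) (β t)))) := by
  have hD := (hΦ.mdifferentiable (α t, β t)).hasMFDerivAt
  have hβ' : HasMFDerivAt 𝓘(ℝ, ℝ) 𝓘(ℝ, ℝ) β t ((1 : ℝ →L[ℝ] ℝ).smulRight b) :=
    hβ.hasFDerivAt.hasMFDerivAt
  refine (hD.comp t (hα.prodMk hβ')).congr_mfderiv (ContinuousLinearMap.ext_ring ?_)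
  have hsum := mfderiv_prod_eq_add_apply
    (v := ((a • F (α t), b) : TangentSpace (I.prod 𝓘(ℝ, ℝ)) (α t, β t)))
    (hΦ.mdifferentiable (α t, β t))
  rw [map_smul, hΦ.mfderiv_apply_left_apply, hΦ.mfderiv_apply_right_apply, ← add_smul] at hsum
  refine Eq.trans ?_ (hsum.trans (one_smul ℝ _).symm)
  exact congrArg (mfderiv _ I _ (α t, β t)) (Prod.ext (one_smul ℝ _) (one_smul ℝ _))

theorem apply_eq_apply_mul_of_isMIntegralCurve [IsManifold I 1 M] (hΦ : IsGlobalFlow I F Φ)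
    {γ : ℝ → M} {a : ℝ} (hγ : IsMIntegralCurve γ (fun y => a • F y)) (t : ℝ) :
    γ t = Φ (γ 0) (a * t) := by
  have hc : ∀ s, HasMFDerivAt 𝓘(ℝ, ℝ) I (fun s => Φ (γ s) (a * (t - s))) s 0 := fun s => by
    have hβ : HasDerivAt (fun s => a * (t - s)) (-a) s := by
      simpa using ((hasDerivAt_id s).const_sub t).const_mul a
    refine (hΦ.hasMFDerivAt_apply_comp (hγ s) hβ).congr_mfderiv ?_
    rw [add_neg_cancel, zero_smul]
    exact ContinuousLinearMap.smulRight_zero _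
  have := (isLocallyConstant_of_hasMFDerivAt_zero hc).apply_eq_of_preconnectedSpace t 0
  simpa [hΦ.apply_zero] using this

end IsGlobalFlow

end

theorem circle_action_iff_period_function_general
    {E : Type*} [NormedAddCommGroup E] [NormedSpace ℝ E]
    {H : Type*} [TopologicalSpace H] {I : ModelWithCorners ℝ E H}
    {M : Type*} [TopologicalSpace M] [ChartedSpace H M] [IsManifold I (⊤ : ℕ∞) M]
    -- the smooth vector field `F`
    (F : (x : M) → TangentSpace I x)
    -- `Φ` is the global flow of `F`
    (Φ : M → ℝ → M)
    (hΦ_smooth : ContMDiff (I.prod 𝓘(ℝ, ℝ)) I (⊤ : ℕ∞) (fun p : M × ℝ => Φ p.1 p.2))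
    (hΦ_zero : ∀ x, Φ x 0 = x)
    (hΦ_add : ∀ x t s, Φ (Φ x t) s = Φ x (t + s))
    (hΦ_deriv : ∀ x t, mfderiv 𝓘(ℝ, ℝ) I (Φ x) t (1 : ℝ) = F (Φ x t))
    -- a smooth strictly positive function `θ` constant along orbits of `F`
    (θ : M → ℝ) (hθ : ContMDiff I 𝓘(ℝ, ℝ) (⊤ : ℕ∞) θ)
    (hθ_orbit : ∀ x t, θ (Φ x t) = θ x)
    -- `Ψ` is the global flow of `θ • F`
    (Ψ : M → ℝ → M)
    (hΨ_smooth : ContMDiff (I.prod 𝓘(ℝ, ℝ)) I (⊤ : ℕ∞) (fun p : M × ℝ => Ψ p.1 p.2))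
    (hΨ_zero : ∀ x, Ψ x 0 = x)
    (hΨ_deriv : ∀ x t, mfderiv 𝓘(ℝ, ℝ) I (Ψ x) t (1 : ℝ) = θ (Ψ x t) • F (Ψ x t)) :
    (∀ x, Ψ x 1 = x) ↔ (∀ x, Φ x (θ x) = x) := by
  have hΦ_diff := hΦ_smooth.mdifferentiable (by simp)
  have hΦ : IsGlobalFlow I F Φ :=
    ⟨hΦ_diff, hΦ_zero, hΦ_add, isMIntegralCurve_of_mfderiv_apply_one hΦ_diff hΦ_deriv⟩
  have hΨ : ∀ x, IsMIntegralCurve (Ψ x) (fun y => θ y • F y) :=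
    isMIntegralCurve_of_mfderiv_apply_one (hΨ_smooth.mdifferentiable (by simp)) hΨ_deriv
  have hθ_diff : MDifferentiable I 𝓘(ℝ, ℝ) θ := hθ.mdifferentiable (by simp)
  have hθ_F : ∀ y, mfderiv I 𝓘(ℝ, ℝ) θ y (θ y • F y) = 0 := fun y => by
    rw [map_smul, hΦ.mfderiv_apply_eq_zero_of_apply_eq (hθ_diff y) (hθ_orbit y), smul_zero]
  have hθ_Ψ : ∀ x t, θ (Ψ x t) = θ x := fun x t => by
    simpa [hΨ_zero] using (hΨ x).apply_comp_eq_of_mfderiv_eq_zero hθ_diff hθ_F t 0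
  have hΨ_Φ : ∀ x, Ψ x 1 = Φ x (θ x) := fun x => by
    have hΨx : IsMIntegralCurve (Ψ x) (fun y => θ x • F y) := fun t => hθ_Ψ x t ▸ hΨ x t
    simpa [hΨ_zero] using hΦ.apply_eq_apply_mul_of_isMIntegralCurve hΨx 1
  simp only [hΨ_Φ]

/-- Let `θ : M → (0,∞)` be smooth, strictly positive, constant along
orbits of `F` (`θ(Φ(x,t)) = θ(x)`), and suppose `θ • F` is complete with global flow `Ψ`.
Then the following are equivalent:
(a) `Ψ(x,1) = x` for all `x` (i.e. `θF` yields a smooth circle action on `M`);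
(b) `Φ(x, θ(x)) = x` for all `x`. -/
theorem circle_action_iff_period_function
    {E : Type*} [NormedAddCommGroup E] [NormedSpace ℝ E] [FiniteDimensional ℝ E]
    {H : Type*} [TopologicalSpace H] {I : ModelWithCorners ℝ E H}
    {M : Type*} [TopologicalSpace M] [ChartedSpace H M] [IsManifold I (⊤ : ℕ∞) M]
    -- the smooth vector field `F`
    (F : (x : M) → TangentSpace I x)
    (hF : ContMDiff I I.tangent (⊤ : ℕ∞) (fun x => (⟨x, F x⟩ : TangentBundle I M)))
    -- `Φ` is the global flow of `F`
    (Φ : M → ℝ → M)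
    (hΦ_smooth : ContMDiff (I.prod 𝓘(ℝ, ℝ)) I (⊤ : ℕ∞) (fun p : M × ℝ => Φ p.1 p.2))
    (hΦ_zero : ∀ x, Φ x 0 = x)
    (hΦ_add : ∀ x t s, Φ (Φ x t) s = Φ x (t + s))
    (hΦ_deriv : ∀ x t, mfderiv 𝓘(ℝ, ℝ) I (Φ x) t (1 : ℝ) = F (Φ x t))
    -- a smooth strictly positive function `θ` constant along orbits of `F`
    (θ : M → ℝ) (hθ : ContMDiff I 𝓘(ℝ, ℝ) (⊤ : ℕ∞) θ) (hθ_pos : ∀ x, 0 < θ x)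
    (hθ_orbit : ∀ x t, θ (Φ x t) = θ x)
    -- `Ψ` is the global flow of `θ • F`
    (Ψ : M → ℝ → M)
    (hΨ_smooth : ContMDiff (I.prod 𝓘(ℝ, ℝ)) I (⊤ : ℕ∞) (fun p : M × ℝ => Ψ p.1 p.2))
    (hΨ_zero : ∀ x, Ψ x 0 = x)
    (hΨ_add : ∀ x t s, Ψ (Ψ x t) s = Ψ x (t + s))
    (hΨ_deriv : ∀ x t, mfderiv 𝓘(ℝ, ℝ) I (Ψ x) t (1 : ℝ) = θ (Ψ x t) • F (Ψ x t)) :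
    (∀ x, Ψ x 1 = x) ↔ (∀ x, Φ x (θ x) = x) :=
  circle_action_iff_period_function_general F Φ hΦ_smooth hΦ_zero hΦ_add hΦ_deriv θ hθ hθ_orbit Ψ
    hΨ_smooth hΨ_zero hΨ_deriv
end

section
/- Suppose θ : M → (0,∞) is a smooth strictly positive function with Φ(x, θ(x)) = x for all x ∈ M, and let z ∈ M be a singular point of F (F(z) = 0), so that A_t := mfderiv at z of x ↦ Φ(x,t) is defined for all t. Then there exists a linear endomorphism D of the tangent space T_zM such that A_t = exp(t·D) for all t ∈ ℝ, and exp(θ(z)·D) = id on T_zM. -/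
/-!
A singular point `z` is an equilibrium of the flow: in a chart, the flow line through `z` has
velocity `O(|γ t - γ 0|)` because the vector field is differentiable and vanishes at `z`, so
Grönwall pins it at `z` for small times, and the group law spreads this to all times. Hence the
differentials `A t = D_z Φ_t` all act on the single space `T_zM`, and the chain rule for
`Φ_{t+s} = Φ_s ∘ Φ_t` makes `t ↦ A t` a differentiable one-parameter group of operators, which
is `exp (t • A'(0))` by uniqueness for the linear ODE `X' = A'(0) X`. Differentiating
`Φ(x, θ x) = x` at `z`, the `θ`-direction contributes nothing since `Φ z` is constant, so
`A (θ z) = id`.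
-/

open scoped Manifold
open Set Filter Topology Asymptotics

section Analysis

variable {E : Type*} [NormedAddCommGroup E] [NormedSpace ℝ E]

theorem eqOn_Icc_of_hasDerivAt_of_norm_le {γ γ' : ℝ → E} {K a b : ℝ}
    (h : ∀ t ∈ Icc a b, HasDerivAt γ (γ' t) t ∧ ‖γ' t‖ ≤ K * ‖γ t - γ a‖) :
    EqOn γ (fun _ => γ a) (Icc a b) := fun t ht =>
  sub_eq_zero.mp <| eq_zero_of_abs_deriv_le_mul_abs_self_of_eq_zero_right
    (fun s hs => ((h s hs).1.sub_const (γ a)).continuousAt.continuousWithinAt)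
    (fun s hs => ((h s (Ico_subset_Icc_self hs)).1.sub_const (γ a)).hasDerivWithinAt)
    (sub_self _) (fun s hs => (h s (Ico_subset_Icc_self hs)).2) t ht

theorem eventuallyEq_const_of_hasDerivAt_of_isBigO {γ γ' : ℝ → E} {t₀ : ℝ}
    (hγ : ∀ᶠ t in 𝓝 t₀, HasDerivAt γ (γ' t) t) (hγ' : γ' =O[𝓝 t₀] fun t => γ t - γ t₀) :
    γ =ᶠ[𝓝 t₀] fun _ => γ t₀ := by
  obtain ⟨K, hK⟩ := hγ'.bound
  obtain ⟨ε, hε, hball⟩ := Metric.nhds_basis_closedBall.eventually_iff.mp (hγ.and hK)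
  rw [Real.closedBall_eq_Icc] at hball
  have right : EqOn γ (fun _ => γ t₀) (Icc t₀ (t₀ + ε)) :=
    eqOn_Icc_of_hasDerivAt_of_norm_le fun t ht => hball ⟨by linarith [ht.1], ht.2⟩
  have left : EqOn (γ ∘ Neg.neg) (fun _ => γ t₀) (Icc (-t₀) (-t₀ + ε)) := by
    have := eqOn_Icc_of_hasDerivAt_of_norm_le (γ := γ ∘ Neg.neg) (γ' := fun t => -γ' (-t))
      (K := K) (a := -t₀) (b := -t₀ + ε) fun t ht => by
        obtain ⟨hd, hb⟩ := hball (x := -t) ⟨by linarith [ht.2], by linarith [ht.1]⟩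
        exact ⟨by simpa using hd.scomp t (hasDerivAt_neg t), by simpa using hb⟩
    simpa using this
  filter_upwards [Icc_mem_nhds (sub_lt_self t₀ hε) (lt_add_of_pos_right t₀ hε)] with t ht
  rcases le_total t₀ t with h | h
  · exact right ⟨h, ht.2⟩
  · simpa using left (x := -t) ⟨by linarith, by linarith [ht.1]⟩

end Analysis

/-- The times fixing `z` form an additive subgroup of `ℝ`; containing a neighbourhood of `0`, it
is open, hence also closed, hence everything. -/
theorem flow_eq_self_of_eventually_eq {X : Type*} {Φ : X → ℝ → X} (hΦ_zero : ∀ x, Φ x 0 = x)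
    (hΦ_add : ∀ x t s, Φ (Φ x t) s = Φ x (t + s)) {z : X} (h : ∀ᶠ t in 𝓝 0, Φ z t = z)
    (t : ℝ) : Φ z t = z := by
  let S : AddSubgroup ℝ :=
    { carrier := {t | Φ z t = z}
      zero_mem' := hΦ_zero z
      add_mem' := fun {a b} (ha : Φ z a = z) (hb : Φ z b = z) =>
        show Φ z (a + b) = z by rw [← hΦ_add, ha, hb]
      neg_mem' := fun {a} (ha : Φ z a = z) =>
        show Φ z (-a) = z by rw [← ha, hΦ_add, ha, add_neg_cancel, hΦ_zero] }
  have hopen : IsOpen (S : Set ℝ) := S.isOpen_of_mem_nhds h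
  have huniv : (S : Set ℝ) = univ :=
    IsClopen.eq_univ ⟨S.isClosed_of_isOpen hopen, hopen⟩ ⟨0, S.zero_mem⟩
  exact eq_univ_iff_forall.mp huniv t

section Chart

variable {𝕜 : Type*} [NontriviallyNormedField 𝕜]
  {E : Type*} [NormedAddCommGroup E] [NormedSpace 𝕜 E] {H : Type*} [TopologicalSpace H]
  {I : ModelWithCorners 𝕜 E H} {M : Type*} [TopologicalSpace M] [ChartedSpace H M]
  {E' : Type*} [NormedAddCommGroup E'] [NormedSpace 𝕜 E']

theorem MDifferentiableAt.isBigO_sub_extChartAt {f : M → E'} {x : M}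
    (hf : MDifferentiableAt I 𝓘(𝕜, E') f x) :
    (fun y => f y - f x) =O[𝓝 x] fun y => extChartAt I x y - extChartAt I x x := by
  have hd : DifferentiableWithinAt 𝕜 (f ∘ (extChartAt I x).symm) (range I)
      (extChartAt I x x) := by
    simpa [writtenInExtChartAt, chartAt_self_eq] using
      hf.differentiableWithinAt_writtenInExtChartAt
  refine (hd.isBigO_sub.comp_tendsto (map_extChartAt_nhds x).le).congr' ?_ EventuallyEq.rfl
  filter_upwards [extChartAt_source_mem_nhds (I := I) x] with y hy
  simp only [Function.comp_apply, (extChartAt I x).left_inv hy, extChartAt_to_inv]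

end Chart

section IntegralCurve

variable {E : Type*} [NormedAddCommGroup E] [NormedSpace ℝ E]
  {H : Type*} [TopologicalSpace H] {I : ModelWithCorners ℝ E H}
  {M : Type*} [TopologicalSpace M] [ChartedSpace H M]

theorem isMIntegralCurve_of_mfderiv {γ : ℝ → M} {v : (x : M) → TangentSpace I x}
    (hγ : MDifferentiable 𝓘(ℝ, ℝ) I γ) (h : ∀ t, mfderiv 𝓘(ℝ, ℝ) I γ t 1 = v (γ t)) :
    IsMIntegralCurve γ v := fun t =>
  (hγ t).hasMFDerivAt.congr_mfderiv <|
    ContinuousLinearMap.ext_ring <| (h t).trans (one_smul ℝ _).symm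

variable [IsManifold I 1 M]

/-- `γ t₀` may lie on the boundary: the chart image of `γ` stays in `range I`, and that is
where the coordinate expression `g` of `v` is differentiable. -/
theorem IsMIntegralCurveAt.eventuallyEq_const_of_eq_zero {γ : ℝ → M}
    {v : (x : M) → TangentSpace I x} {t₀ : ℝ} (hγ : IsMIntegralCurveAt γ v t₀)
    (hv : MDifferentiableAt I I.tangent (fun x => (⟨x, v x⟩ : TangentBundle I M)) (γ t₀))
    (h0 : v (γ t₀) = 0) : γ =ᶠ[𝓝 t₀] fun _ => γ t₀ := by
  let g : M → E := fun x => tangentCoordChange I x (γ t₀) x (v x)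
  have hg : MDifferentiableAt I 𝓘(ℝ, E) g (γ t₀) := (mdifferentiableAt_section I v).mp hv
  have hg0 : g (γ t₀) = 0 := by simp only [g, h0]; exact map_zero _
  have hbig : (fun t => g (γ t)) =O[𝓝 t₀]
      fun t => extChartAt I (γ t₀) (γ t) - extChartAt I (γ t₀) (γ t₀) := by
    simpa only [hg0, sub_zero, Function.comp_def] using
      hg.isBigO_sub_extChartAt.comp_tendsto hγ.continuousAt
  have hchart : (extChartAt I (γ t₀) ∘ γ) =ᶠ[𝓝 t₀] fun _ => extChartAt I (γ t₀) (γ t₀) :=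
    eventuallyEq_const_of_hasDerivAt_of_isBigO hγ.eventually_hasDerivAt hbig
  filter_upwards [hchart, hγ.continuousAt.preimage_mem_nhds
    (extChartAt_source_mem_nhds (I := I) (γ t₀))] with t ht hsrc
  exact (extChartAt I (γ t₀)).injOn hsrc (mem_extChartAt_source _) ht

theorem flow_eq_self_of_eq_zero {F : (x : M) → TangentSpace I x} {Φ : M → ℝ → M} {z : M}
    (hF : MDifferentiableAt I I.tangent (fun x => (⟨x, F x⟩ : TangentBundle I M)) z)
    (hΦ : MDifferentiable 𝓘(ℝ, ℝ) I (Φ z)) (hΦ_zero : ∀ x, Φ x 0 = x)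
    (hΦ_add : ∀ x t s, Φ (Φ x t) s = Φ x (t + s))
    (hΦ_deriv : ∀ t, mfderiv 𝓘(ℝ, ℝ) I (Φ z) t 1 = F (Φ z t)) (hz : F z = 0) (t : ℝ) :
    Φ z t = z := by
  have hcurve := (isMIntegralCurve_of_mfderiv hΦ hΦ_deriv).isMIntegralCurveAt 0
  rw [← hΦ_zero z] at hF hz
  have hloc := hcurve.eventuallyEq_const_of_eq_zero hF hz
  rw [hΦ_zero] at hloc
  exact flow_eq_self_of_eventually_eq hΦ_zero hΦ_add hloc t

end IntegralCurve

theorem eq_exp_smul_deriv_of_map_add {𝔸 : Type*} [NormedRing 𝔸] [NormedAlgebra ℝ 𝔸]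
    [CompleteSpace 𝔸] {A : ℝ → 𝔸} (hA : DifferentiableAt ℝ A 0) (h0 : A 0 = 1)
    (hadd : ∀ s t, A (s + t) = A s * A t) : A = fun t => NormedSpace.exp (t • deriv A 0) := by
  have hderiv : ∀ t, HasDerivAt A (deriv A 0 * A t) t := fun t => by
    have : HasDerivAt (fun s => A (s + t)) (deriv A 0 * A t) (t - t) := by
      simpa only [hadd, sub_self] using hA.hasDerivAt.mul_const (A t)
    simpa using this.comp_sub_const t t
  refine ODE_solution_unique_univ (v := fun _ X => deriv A 0 * X) (s := fun _ => univ) (t₀ := 0)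
    (fun _ => (ContinuousLinearMap.mul ℝ 𝔸 (deriv A 0)).lipschitz.lipschitzOnWith)
    (fun t => ⟨hderiv t, trivial⟩) (fun t => ⟨hasDerivAt_exp_smul_const' _ t, trivial⟩) ?_
  simp [h0]

section Differentials

variable {𝕜 : Type*} [NontriviallyNormedField 𝕜]
  {E : Type*} [NormedAddCommGroup E] [NormedSpace 𝕜 E] {H : Type*} [TopologicalSpace H]
  {I : ModelWithCorners 𝕜 E H} {M : Type*} [TopologicalSpace M] [ChartedSpace H M]
  {E' : Type*} [NormedAddCommGroup E'] [NormedSpace 𝕜 E'] {H' : Type*} [TopologicalSpace H']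
  {I' : ModelWithCorners 𝕜 E' H'} {M' : Type*} [TopologicalSpace M'] [ChartedSpace H' M']
  {E'' : Type*} [NormedAddCommGroup E''] [NormedSpace 𝕜 E''] {H'' : Type*} [TopologicalSpace H'']
  {J : ModelWithCorners 𝕜 E'' H''} {N : Type*} [TopologicalSpace N] [ChartedSpace H'' N]

/-- Since every `f t` maps `x` to the same point `y`, the coordinate changes in
`inTangentCoordinates` are trivial, so `ContMDiffAt.mfderiv` applies to the bare differentials. -/
theorem ContMDiffAt.contDiffAt_mfderiv_of_eventually_apply_eq {V : Type*} [NormedAddCommGroup V]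
    [NormedSpace 𝕜 V] {m n : WithTop ℕ∞} [IsManifold I 1 M] [IsManifold I' 1 M']
    {f : V → M → M'} {x : M} {y : M'} {t₀ : V}
    (hf : ContMDiffAt (𝓘(𝕜, V).prod I) I' n (Function.uncurry f) (t₀, x))
    (hfix : ∀ᶠ t in 𝓝 t₀, f t x = y) (hmn : m + 1 ≤ n) :
    ContDiffAt 𝕜 m (F := E →L[𝕜] E') (fun t => mfderiv I I' (f t) x) t₀ := by
  have hcoord := hf.mfderiv f (fun _ => x) contMDiffAt_const hmn
  rw [contMDiffAt_iff_contDiffAt] at hcoord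
  refine hcoord.congr_of_eventuallyEq (EventuallyEq.symm ?_)
  have hy : f t₀ x = y := hfix.self_of_nhds
  filter_upwards [hfix] with t ht
  refine (inTangentCoordinates_eq _ _ _ (mem_chart_source H x)
    (by rw [ht, hy]; exact mem_chart_source H' y)).trans ?_
  ext v
  simp only [ContinuousLinearMap.comp_apply, ht, hy]
  rw [(tangentBundleCore I' M').coordChange_self _ _ (mem_achart_source H' y)]
  exact congrArg (mfderiv I I' (f t) x)
    ((tangentBundleCore I M).coordChange_self _ _ (mem_achart_source H x) v)

theorem mfderiv_comp_eq_comp_of_eq {f : M → M'} {g : M' → N} {x : M} {y : M'}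
    (hg : MDifferentiableAt I' J g y) (hf : MDifferentiableAt I I' f x) (hy : f x = y) :
    mfderiv I J (g ∘ f) x = (mfderiv I' J g y).comp (mfderiv I I' f x) := by
  subst hy
  exact mfderiv_comp x hg hf

theorem mfderiv_comp_graph_eq_of_mfderiv_eq_zero {f : M → M' → N} {g : M → M'} {x : M}
    (hf : MDifferentiableAt (I.prod I') J (Function.uncurry f) (x, g x))
    (hg : MDifferentiableAt I I' g x) (h : mfderiv I' J (f x) (g x) = 0) :
    mfderiv I J (fun y => f y (g y)) x = mfderiv I J (fun y => f y (g x)) x := by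
  refine (hf.hasMFDerivAt.comp x ((hasMFDerivAt_id x).prodMk hg.hasMFDerivAt)).mfderiv.trans ?_
  ext v
  have hsplit : mfderiv (I.prod I') J (Function.uncurry f) (x, g x) (v, mfderiv I I' g x v) =
      mfderiv I J (fun y => f y (g x)) x v + mfderiv I' J (f x) (g x) (mfderiv I I' g x v) :=
    mfderiv_prod_eq_add_apply hf
  rw [h, zero_apply, add_zero] at hsplit
  exact hsplit

end Differentials

theorem differentials_at_singular_point_generator_general
    {E : Type*} [NormedAddCommGroup E] [NormedSpace ℝ E] [FiniteDimensional ℝ E]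
    {H : Type*} [TopologicalSpace H] {I : ModelWithCorners ℝ E H}
    {M : Type*} [TopologicalSpace M] [ChartedSpace H M] [IsManifold I (⊤ : ℕ∞) M]
    -- the smooth vector field `F`
    (F : (x : M) → TangentSpace I x)
    (hF : ContMDiff I I.tangent (⊤ : ℕ∞) (fun x => (⟨x, F x⟩ : TangentBundle I M)))
    -- `Φ` is the global flow of `F`
    (Φ : M → ℝ → M)
    (hΦ_smooth : ContMDiff (I.prod 𝓘(ℝ, ℝ)) I (⊤ : ℕ∞) (fun p : M × ℝ => Φ p.1 p.2))
    (hΦ_zero : ∀ x, Φ x 0 = x)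
    (hΦ_add : ∀ x t s, Φ (Φ x t) s = Φ x (t + s))
    (hΦ_deriv : ∀ x t, mfderiv 𝓘(ℝ, ℝ) I (Φ x) t (1 : ℝ) = F (Φ x t))
    -- the smooth strictly positive period function `θ`
    (θ : M → ℝ) (hθ : ContMDiff I 𝓘(ℝ, ℝ) (⊤ : ℕ∞) θ)
    (hθ_per : ∀ x, Φ x (θ x) = x)
    -- a singular point `z` of `F`
    (z : M) (hz : F z = 0) :
    ∃ D : TangentSpace I z →L[ℝ] TangentSpace I z,
      (∀ t : ℝ, mfderiv I I (fun x => Φ x t) z = NormedSpace.exp (𝔸 := E →L[ℝ] E) (t • D)) ∧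
      NormedSpace.exp (𝔸 := E →L[ℝ] E) (θ z • D) = ContinuousLinearMap.id ℝ (TangentSpace I z) := by
  have hfix : ∀ t, Φ z t = z :=
    flow_eq_self_of_eq_zero ((hF z).mdifferentiableAt (by simp))
      (fun t => ((hΦ_smooth (z, t)).comp t (contMDiffAt_const.prodMk contMDiffAt_id))
        |>.mdifferentiableAt (by simp))
      hΦ_zero hΦ_add (hΦ_deriv z) hz
  have hΦ_mdiff : ∀ t x, MDifferentiableAt I I (fun x => Φ x t) x := fun t x =>
    ((hΦ_smooth (x, t)).comp x (contMDiffAt_id.prodMk contMDiffAt_const)).mdifferentiableAt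
      (by simp)
  set A : ℝ → E →L[ℝ] E := fun t => mfderiv I I (fun x => Φ x t) z
  have hA0 : A 0 = 1 := (mfderiv_congr (funext hΦ_zero)).trans mfderiv_id
  have hA_add : ∀ s t, A (s + t) = A s * A t := fun s t =>
    (mfderiv_congr (funext fun x => by rw [add_comm]; exact (hΦ_add x t s).symm)).trans
      (mfderiv_comp_eq_comp_of_eq (hΦ_mdiff s z) (hΦ_mdiff t z) (hfix t))
  have hA_diff : DifferentiableAt ℝ A 0 :=
    (((hΦ_smooth (z, 0)).comp (0, z) (contMDiffAt_snd.prodMk contMDiffAt_fst)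
      ).contDiffAt_mfderiv_of_eventually_apply_eq (m := 1) (Eventually.of_forall hfix)
      (WithTop.coe_le_coe.mpr le_top)).differentiableAt one_ne_zero
  have hA_exp := eq_exp_smul_deriv_of_map_add hA_diff hA0 hA_add
  have hflat : mfderiv 𝓘(ℝ, ℝ) I (Φ z) (θ z) = 0 := by
    rw [show Φ z = fun _ => z from funext hfix]
    exact mfderiv_const
  have hA_period : A (θ z) = 1 :=
    (mfderiv_comp_graph_eq_of_mfderiv_eq_zero ((hΦ_smooth _).mdifferentiableAt (by simp))
      ((hθ z).mdifferentiableAt (by simp)) hflat).symm.trans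
      ((mfderiv_congr (funext hθ_per)).trans mfderiv_id)
  exact ⟨deriv A 0, fun t => congrFun hA_exp t, (congrFun hA_exp (θ z)).symm.trans hA_period⟩

/-- Suppose `θ : M → (0,∞)` is smooth, strictly positive, with
`Φ(x, θ(x)) = x` for all `x`, and let `z` be a singular point of `F` (`F z = 0`), so that
`A_t := mfderiv (x ↦ Φ(x,t))` at `z` is defined for all `t`.  Then there is a linear
endomorphism `D` of `T_zM` with `A_t = exp(t • D)` for all `t`, and
`exp(θ(z) • D) = id` on `T_zM`. -/
theorem differentials_at_singular_point_generator
    {E : Type*} [NormedAddCommGroup E] [NormedSpace ℝ E] [FiniteDimensional ℝ E]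
    {H : Type*} [TopologicalSpace H] {I : ModelWithCorners ℝ E H}
    {M : Type*} [TopologicalSpace M] [ChartedSpace H M] [IsManifold I (⊤ : ℕ∞) M]
    -- the smooth vector field `F`
    (F : (x : M) → TangentSpace I x)
    (hF : ContMDiff I I.tangent (⊤ : ℕ∞) (fun x => (⟨x, F x⟩ : TangentBundle I M)))
    -- `Φ` is the global flow of `F`
    (Φ : M → ℝ → M)
    (hΦ_smooth : ContMDiff (I.prod 𝓘(ℝ, ℝ)) I (⊤ : ℕ∞) (fun p : M × ℝ => Φ p.1 p.2))
    (hΦ_zero : ∀ x, Φ x 0 = x)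
    (hΦ_add : ∀ x t s, Φ (Φ x t) s = Φ x (t + s))
    (hΦ_deriv : ∀ x t, mfderiv 𝓘(ℝ, ℝ) I (Φ x) t (1 : ℝ) = F (Φ x t))
    -- the smooth strictly positive period function `θ`
    (θ : M → ℝ) (hθ : ContMDiff I 𝓘(ℝ, ℝ) (⊤ : ℕ∞) θ) (hθ_pos : ∀ x, 0 < θ x)
    (hθ_per : ∀ x, Φ x (θ x) = x)
    -- a singular point `z` of `F`
    (z : M) (hz : F z = 0) :
    ∃ D : TangentSpace I z →L[ℝ] TangentSpace I z,
      (∀ t : ℝ, mfderiv I I (fun x => Φ x t) z = NormedSpace.exp (𝔸 := E →L[ℝ] E) (t • D)) ∧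
      NormedSpace.exp (𝔸 := E →L[ℝ] E) (θ z • D) = ContinuousLinearMap.id ℝ (TangentSpace I z) :=
  differentials_at_singular_point_generator_general F hF Φ hΦ_smooth hΦ_zero hΦ_add hΦ_deriv θ hθ
    hθ_per z hz
end

section
/- Suppose θ : M → (0,∞) is a smooth strictly positive function with Φ(x, θ(x)) = x for all x ∈ M, let z ∈ M be a singular point of F (F(z) = 0), and let D be the generator of the one-parameter group A_t := mfderiv at z of x ↦ Φ(x,t), i.e. A_t = exp(t·D) for all t. Then there exist integers k, l ≥ 0 with 2k + l = dim M, nonzero real numbers A₁, …, A_k, and a basis of T_zM in which the matrix of D is block-diagonal with k two-by-two blocks [[0, −A_j],[A_j, 0]] and an l×l zero block; equivalently, in suitable local coordinates (x₁,y₁,…,x_k,y_k,t₁,…,t_l) at z the linear part of F at z is −A₁y₁ ∂/∂x₁ + A₁x₁ ∂/∂y₁ + ⋯ − A_k y_k ∂/∂x_k + A_k x_k ∂/∂y_k. -/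
/-!
Differentiating `Φ (x, θ x) = x` at `z`, where the time derivative `∂ₜΦ (z, θ z) = F z`
vanishes, gives `exp (θ z • D) = 1`. Averaging any inner product along `s ↦ exp (s • D)`
over one period then yields an inner product for which `D` is skew-adjoint. A skew-adjoint
operator is put in normal form by induction on the dimension: a unit eigenvector `v` of the
symmetric operator `D ∘ D` spans either a line in `ker D` or, together with `D v`, an invariant
plane on which `D` acts as `[[0, -a], [a, 0]]`; the orthogonal complement is again invariant.
-/

open scoped Manifold RealInnerProductSpace

open Module Submodule

section RotationBasis

variable {V : Type*} [AddCommGroup V] [Module ℝ V]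

/-- For each `j`, `D` acts on the plane spanned by `f (inl (inl j))`, `f (inl (inr j))` by the
matrix `[[0, -a j], [a j, 0]]`; the vectors `f (inr i)` lie in the kernel of `D`. -/
structure IsRotationFamily {ι κ : Type*} (D : V →ₗ[ℝ] V) (a : ι → ℝ) (f : (ι ⊕ ι) ⊕ κ → V) :
    Prop where
  ne_zero : ∀ j, a j ≠ 0
  apply_inl_inl : ∀ j, D (f (.inl (.inl j))) = a j • f (.inl (.inr j))
  apply_inl_inr : ∀ j, D (f (.inl (.inr j))) = -a j • f (.inl (.inl j))
  apply_inr : ∀ i, D (f (.inr i)) = 0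

def HasRotationBasis (D : V →ₗ[ℝ] V) : Prop :=
  ∃ (ι κ : Type) (a : ι → ℝ) (b : Basis ((ι ⊕ ι) ⊕ κ) ℝ V), IsRotationFamily D a b

namespace IsRotationFamily

variable {ι κ : Type} {D : V →ₗ[ℝ] V} {a : ι → ℝ} {f : (ι ⊕ ι) ⊕ κ → V}

theorem apply_mem_span (h : IsRotationFamily D a f) :
    ∀ x ∈ span ℝ (Set.range f), D x ∈ span ℝ (Set.range f) := by
  suffices span ℝ (Set.range f) ≤ (span ℝ (Set.range f)).comap D from fun x hx => this hx
  rw [span_le]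
  rintro _ ⟨(j | j) | i, rfl⟩
  · rw [SetLike.mem_coe, mem_comap, h.apply_inl_inl]; exact smul_mem _ _ (subset_span ⟨_, rfl⟩)
  · rw [SetLike.mem_coe, mem_comap, h.apply_inl_inr]; exact smul_mem _ _ (subset_span ⟨_, rfl⟩)
  · rw [SetLike.mem_coe, mem_comap, h.apply_inr]; exact zero_mem _

theorem hasRotationBasis_restrict (h : IsRotationFamily D a f) (hli : LinearIndependent ℝ f) :
    HasRotationBasis (D.restrict h.apply_mem_span) := by
  refine ⟨ι, κ, a, Basis.span hli, h.ne_zero, fun j => ?_, fun j => ?_, fun i => ?_⟩ <;>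
    ext <;> simp [Basis.span_apply, h.apply_inl_inl, h.apply_inl_inr, h.apply_inr]

end IsRotationFamily

theorem hasRotationBasis_of_subsingleton [Subsingleton V] (D : V →ₗ[ℝ] V) :
    HasRotationBasis D :=
  ⟨Empty, Empty, Empty.elim, .empty V, ⟨nofun, nofun, nofun, nofun⟩⟩

theorem HasRotationBasis.of_isCompl {D : V →ₗ[ℝ] V} {P Q : Submodule ℝ V} (hPQ : IsCompl P Q)
    (hP : ∀ x ∈ P, D x ∈ P) (hQ : ∀ x ∈ Q, D x ∈ Q) (hDP : HasRotationBasis (D.restrict hP))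
    (hDQ : HasRotationBasis (D.restrict hQ)) : HasRotationBasis D := by
  obtain ⟨ιP, κP, aP, bP, hbP⟩ := hDP
  obtain ⟨ιQ, κQ, aQ, bQ, hbQ⟩ := hDQ
  let e : ((ιP ⊕ ιP) ⊕ κP) ⊕ ((ιQ ⊕ ιQ) ⊕ κQ) ≃ ((ιP ⊕ ιQ) ⊕ (ιP ⊕ ιQ)) ⊕ (κP ⊕ κQ) :=
    (Equiv.sumSumSumComm _ _ _ _).trans ((Equiv.sumSumSumComm _ _ _ _).sumCongr (Equiv.refl _))
  refine ⟨ιP ⊕ ιQ, κP ⊕ κQ, Sum.elim aP aQ,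
    ((bP.prod bQ).map (prodEquivOfIsCompl P Q hPQ)).reindex e, ?_, ?_, ?_, ?_⟩ <;>
    rintro (j | j)
  exacts [hbP.ne_zero j, hbQ.ne_zero j,
    by simpa [e, Basis.prod_apply] using congr_arg Subtype.val (hbP.apply_inl_inl j),
    by simpa [e, Basis.prod_apply] using congr_arg Subtype.val (hbQ.apply_inl_inl j),
    by simpa [e, Basis.prod_apply] using congr_arg Subtype.val (hbP.apply_inl_inr j),
    by simpa [e, Basis.prod_apply] using congr_arg Subtype.val (hbQ.apply_inl_inr j),
    by simpa [e, Basis.prod_apply] using congr_arg Subtype.val (hbP.apply_inr j),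
    by simpa [e, Basis.prod_apply] using congr_arg Subtype.val (hbQ.apply_inr j)]

theorem HasRotationBasis.exists_fin [FiniteDimensional ℝ V] {D : V →ₗ[ℝ] V}
    (h : HasRotationBasis D) :
    ∃ k l : ℕ, 2 * k + l = finrank ℝ V ∧
      ∃ (a : Fin k → ℝ) (b : Basis ((Fin k ⊕ Fin k) ⊕ Fin l) ℝ V), IsRotationFamily D a b := by
  obtain ⟨ι, κ, a, b, hb⟩ := h
  have := Module.Finite.finite_basis b
  have : Finite (ι ⊕ ι) := Finite.sum_left κ
  have : Finite ι := Finite.sum_left ι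
  have : Finite κ := Finite.sum_right (ι ⊕ ι)
  have : Fintype ι := Fintype.ofFinite _
  have : Fintype κ := Fintype.ofFinite _
  let eι := Fintype.equivFin ι
  let eκ := Fintype.equivFin κ
  refine ⟨Fintype.card ι, Fintype.card κ, ?_, a ∘ eι.symm, b.reindex ((eι.sumCongr eι).sumCongr eκ),
    fun j => hb.ne_zero _, fun j => ?_, fun j => ?_, fun i => ?_⟩
  · rw [finrank_eq_card_basis b, Fintype.card_sum, Fintype.card_sum]; ring
  · simpa using hb.apply_inl_inl (eι.symm j)
  · simpa using hb.apply_inl_inr (eι.symm j)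
  · simpa using hb.apply_inr (eκ.symm i)

end RotationBasis

section Skew

variable {V : Type*} [NormedAddCommGroup V] [InnerProductSpace ℝ V] {D : V →ₗ[ℝ] V}

theorem apply_mem_orthogonal_of_skew (hD : ∀ u v, ⟪D u, v⟫ = -⟪u, D v⟫) {P : Submodule ℝ V}
    (hP : ∀ x ∈ P, D x ∈ P) : ∀ x ∈ Pᗮ, D x ∈ Pᗮ := by
  intro x hx u hu
  rw [← neg_neg ⟪u, D x⟫, ← hD, hx _ (hP u hu), neg_zero]

theorem inner_apply_self_eq_zero_of_skew (hD : ∀ u v, ⟪D u, v⟫ = -⟪u, D v⟫) (v : V) :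
    ⟪v, D v⟫ = 0 := by
  have := hD v v
  rw [real_inner_comm] at this
  linarith

theorem exists_isRotationFamily_of_skew [FiniteDimensional ℝ V] [Nontrivial V]
    (hD : ∀ u v, ⟪D u, v⟫ = -⟪u, D v⟫) :
    ∃ (ι κ : Type) (a : ι → ℝ) (f : (ι ⊕ ι) ⊕ κ → V),
      Nonempty ((ι ⊕ ι) ⊕ κ) ∧ Orthonormal ℝ f ∧ IsRotationFamily D a f := by
  have hS : (D ∘ₗ D).IsSymmetric := fun u v => by
    simp only [LinearMap.comp_apply, hD, neg_neg]
  let i : Fin (finrank ℝ V) := ⟨0, finrank_pos⟩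
  set v := hS.eigenvectorBasis rfl i
  have hv : ‖v‖ = 1 := (hS.eigenvectorBasis rfl).orthonormal.1 i
  have hDDv : D (D v) = hS.eigenvalues rfl i • v := hS.apply_eigenvectorBasis rfl i
  by_cases hDv : D v = 0
  · refine ⟨Empty, Unit, Empty.elim, fun _ => v, ⟨.inr ()⟩, ?_, nofun, nofun, nofun, fun _ => hDv⟩
    simp [orthonormal_iff_ite, Sum.forall, hv]
  set α := ‖D v‖
  have hα : α ≠ 0 := norm_ne_zero_iff.mpr hDv
  set w := α⁻¹ • D v
  have hDv_eq : D v = α • w := by simp [w, smul_smul, hα]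
  have hμ : hS.eigenvalues rfl i = -α ^ 2 := by
    have := hD (D v) v
    rw [hDDv, real_inner_smul_left, real_inner_self_eq_norm_sq, hv,
      real_inner_self_eq_norm_sq] at this
    simpa using this
  have hDw : D w = -α • v := by
    simp only [w, map_smul, hDDv, hμ, smul_smul]
    congr 1
    field_simp
  have hw : ‖w‖ = 1 := by rw [norm_smul, norm_inv, norm_norm, inv_mul_cancel₀ hα]
  have hvw : ⟪v, w⟫ = 0 := by
    simp [w, real_inner_smul_right, inner_apply_self_eq_zero_of_skew hD]
  refine ⟨Unit, Empty, fun _ => α, Sum.elim (Sum.elim (fun _ => v) (fun _ => w)) Empty.elim,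
    ⟨.inl (.inl ())⟩, ?_, fun _ => hα, fun _ => hDv_eq, fun _ => hDw, nofun⟩
  simp [orthonormal_iff_ite, Sum.forall, hv, hw, hvw, real_inner_comm v w]

theorem hasRotationBasis_of_skew [FiniteDimensional ℝ V] (hD : ∀ u v, ⟪D u, v⟫ = -⟪u, D v⟫) :
    HasRotationBasis D := by
  induction h : finrank ℝ V using Nat.strong_induction_on generalizing V with
  | _ n ih =>
  rcases subsingleton_or_nontrivial V with hV | hV
  · exact hasRotationBasis_of_subsingleton D
  obtain ⟨ι, κ, a, f, ⟨i⟩, hf, hrot⟩ := exists_isRotationFamily_of_skew hD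
  set P := span ℝ (Set.range f)
  have hQ : ∀ x ∈ Pᗮ, D x ∈ Pᗮ := apply_mem_orthogonal_of_skew hD hrot.apply_mem_span
  refine .of_isCompl P.isCompl_orthogonal hrot.apply_mem_span hQ
    (hrot.hasRotationBasis_restrict hf.linearIndependent)
    (ih _ ?_ (D := D.restrict hQ) (fun u v => hD u v) rfl)
  have hP : 0 < finrank ℝ P :=
    finrank_pos_iff_exists_ne_zero.mpr ⟨⟨f i, subset_span ⟨i, rfl⟩⟩, by simpa using hf.ne_zero i⟩
  have := P.finrank_add_finrank_orthogonal
  omega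

end Skew

theorem hasRotationBasis_of_isSkewAdjoint {V : Type*} [AddCommGroup V] [Module ℝ V]
    [FiniteDimensional ℝ V] {B : LinearMap.BilinForm ℝ V} (hB : B.IsSymm)
    (hpos : ∀ v, v ≠ 0 → 0 < B v v) {D : V →ₗ[ℝ] V} (hD : LinearMap.IsSkewAdjoint B D) :
    HasRotationBasis D := by
  let core : InnerProductSpace.Core ℝ V :=
    { inner u v := B u v
      conj_inner_symm u v := hB.eq v u
      re_inner_nonneg v := by
        rcases eq_or_ne v 0 with rfl | hv
        · simp
        · exact (hpos v hv).le
      add_left u v w := by simp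
      smul_left u v r := by simp
      definite v hv := by_contra fun hne => (hpos v hne).ne' hv }
  let := core.toNormedAddCommGroup
  let := InnerProductSpace.ofCore core.toCore
  exact hasRotationBasis_of_skew fun u v => (hD u v).trans (map_neg (B u) (D v))

section Averaging

open NormedSpace

theorem exp_apply_ne_zero {V : Type*} [NormedAddCommGroup V] [NormedSpace ℝ V] [CompleteSpace V]
    (A : V →L[ℝ] V) {v : V} (hv : v ≠ 0) : exp A v ≠ 0 := by
  let _ : NormedAlgebra ℚ (V →L[ℝ] V) := .restrictScalars ℚ ℝ _
  obtain ⟨U, hU⟩ := isUnit_exp A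
  intro h
  apply hv
  calc v = (↑U⁻¹ * ↑U : V →L[ℝ] V) v := by rw [U.inv_mul]; rfl
    _ = (↑U⁻¹ : V →L[ℝ] V) (exp A v) := by rw [hU]; rfl
    _ = 0 := by rw [h, map_zero]

theorem exists_isSkewAdjoint_of_exp_smul_eq_one {V : Type*} [NormedAddCommGroup V]
    [NormedSpace ℝ V] [FiniteDimensional ℝ V] {D : V →L[ℝ] V} {T : ℝ} (hT : 0 < T)
    (hexp : exp (T • D) = 1) :
    ∃ B : LinearMap.BilinForm ℝ V, B.IsSymm ∧ (∀ v, v ≠ 0 → 0 < B v v) ∧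
      LinearMap.IsSkewAdjoint B (D : V →ₗ[ℝ] V) := by
  let _ : NormedAlgebra ℚ (V →L[ℝ] V) := .restrictScalars ℚ ℝ _
  let γ (x : V) (s : ℝ) : EuclideanSpace ℝ (Fin (finrank ℝ V)) := toEuclidean (exp (s • D) x)
  have hγ (x : V) (s : ℝ) : HasDerivAt (γ x) (γ (D x) s) s :=
    (toEuclidean.toContinuousLinearMap.comp (.apply ℝ V x)).hasFDerivAt.comp_hasDerivAt s
      (hasDerivAt_exp_smul_const D s)
  have hγc (x : V) : Continuous (γ x) :=
    continuous_iff_continuousAt.2 fun s => (hγ x s).continuousAt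
  have hint (u v : V) : IntervalIntegrable (fun s => ⟪γ u s, γ v s⟫) MeasureTheory.volume 0 T :=
    ((hγc u).inner (hγc v)).intervalIntegrable 0 T
  let B : LinearMap.BilinForm ℝ V := LinearMap.mk₂ ℝ (fun u v => ∫ s in 0..T, ⟪γ u s, γ v s⟫)
    (fun u₁ u₂ v => by
      simp only [γ, map_add, inner_add_left]
      exact intervalIntegral.integral_add (hint u₁ v) (hint u₂ v))
    (fun c u v => by
      simp only [γ, map_smul, real_inner_smul_left]
      exact intervalIntegral.integral_const_mul c _)
    (fun u v₁ v₂ => by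
      simp only [γ, map_add, inner_add_right]
      exact intervalIntegral.integral_add (hint u v₁) (hint u v₂))
    (fun c u v => by
      simp only [γ, map_smul, real_inner_smul_right]
      exact intervalIntegral.integral_const_mul c _)
  refine ⟨B, ⟨fun u v => intervalIntegral.integral_congr fun s _ => real_inner_comm _ _⟩,
    fun v hv => ?_, fun u v => ?_⟩
  · refine intervalIntegral.intervalIntegral_pos_of_pos (hint v v) (fun s => ?_) hT
    rw [real_inner_self_eq_norm_sq]
    exact pow_pos (norm_pos_iff.2 (by simpa [γ] using exp_apply_ne_zero (s • D) hv)) 2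
  · -- `B (D u) v + B u (D v)` integrates the derivative of `s ↦ ⟪γ u s, γ v s⟫`, which is
    -- `T`-periodic.
    have hγT (x : V) : γ x T = γ x 0 := by simp [γ, hexp]
    have hFTC := intervalIntegral.integral_eq_sub_of_hasDerivAt
      (fun s _ => (hγ u s).inner ℝ (hγ v s)) ((hint u (D v)).add (hint (D u) v))
    rw [intervalIntegral.integral_add (hint u (D v)) (hint (D u) v), hγT, hγT, sub_self] at hFTC
    change ∫ s in 0..T, ⟪γ (D u) s, γ v s⟫ = ∫ s in 0..T, ⟪γ u s, γ (-D v) s⟫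
    simp only [γ, map_neg, inner_neg_right, intervalIntegral.integral_neg] at hFTC ⊢
    linarith

theorem hasRotationBasis_of_exp_smul_eq_one {V : Type*} [NormedAddCommGroup V]
    [NormedSpace ℝ V] [FiniteDimensional ℝ V] {D : V →L[ℝ] V} {T : ℝ} (hT : 0 < T)
    (hexp : exp (T • D) = 1) : HasRotationBasis (D : V →ₗ[ℝ] V) :=
  let ⟨_, hB, hpos, hD⟩ := exists_isSkewAdjoint_of_exp_smul_eq_one hT hexp
  hasRotationBasis_of_isSkewAdjoint hB hpos hD

end Averaging

section Manifold

variable {𝕜 : Type*} [NontriviallyNormedField 𝕜]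
  {E : Type*} [NormedAddCommGroup E] [NormedSpace 𝕜 E] {H : Type*} [TopologicalSpace H]
  {I : ModelWithCorners 𝕜 E H} {M : Type*} [TopologicalSpace M] [ChartedSpace H M]
  {E' : Type*} [NormedAddCommGroup E'] [NormedSpace 𝕜 E'] {H' : Type*} [TopologicalSpace H']
  {J : ModelWithCorners 𝕜 E' H'} {N : Type*} [TopologicalSpace N] [ChartedSpace H' N]

theorem mfderiv_apply_eq_id_of_apply_eq_self {f : M → N → M} {τ : M → N} {z : M}
    (hf : MDifferentiableAt (I.prod J) I (fun p : M × N => f p.1 p.2) (z, τ z))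
    (hτ : MDifferentiableAt I J τ z) (hfτ : ∀ x, f x (τ x) = x)
    (hz : mfderiv J I (f z) (τ z) = 0) :
    mfderiv I I (fun x => f x (τ z)) z = ContinuousLinearMap.id 𝕜 (TangentSpace I z) := by
  have hg : mfderiv I (I.prod J) (fun x => (x, τ x)) z =
      (mfderiv I I id z).prod (mfderiv I J τ z) :=
    mdifferentiableAt_id.mfderiv_prod hτ
  ext v
  have h := congr($(mfderiv_comp (f := fun x => (x, τ x)) z hf (mdifferentiableAt_id.prodMk hτ)) v)
  rw [show ((fun p : M × N => f p.1 p.2) ∘ fun x => (x, τ x)) = id from funext hfτ, mfderiv_id,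
    ContinuousLinearMap.comp_apply, hg, mfderiv_prod_eq_add_apply hf] at h
  change v = mfderiv I I (fun x => f x (τ z)) z (mfderiv I I id z v) +
    mfderiv J I (f z) (τ z) (mfderiv I J τ z v) at h
  simp only [mfderiv_id, hz, ContinuousLinearMap.id_apply, zero_apply, add_zero] at h
  exact h.symm

end Manifold

theorem linear_part_of_periodic_field_at_singular_point_general
    {E : Type*} [NormedAddCommGroup E] [NormedSpace ℝ E] [FiniteDimensional ℝ E]
    {H : Type*} [TopologicalSpace H] {I : ModelWithCorners ℝ E H}
    {M : Type*} [TopologicalSpace M] [ChartedSpace H M]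
    -- the smooth vector field `F`
    (F : (x : M) → TangentSpace I x)
    -- `Φ` is the global flow of `F`
    (Φ : M → ℝ → M)
    (hΦ_smooth : ContMDiff (I.prod 𝓘(ℝ, ℝ)) I (⊤ : ℕ∞) (fun p : M × ℝ => Φ p.1 p.2))
    (hΦ_deriv : ∀ x t, mfderiv 𝓘(ℝ, ℝ) I (Φ x) t (1 : ℝ) = F (Φ x t))
    -- the smooth strictly positive period function `θ`
    (θ : M → ℝ) (hθ : ContMDiff I 𝓘(ℝ, ℝ) (⊤ : ℕ∞) θ) (hθ_pos : ∀ x, 0 < θ x)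
    (hθ_per : ∀ x, Φ x (θ x) = x)
    -- a singular point `z` of `F`
    (z : M) (hz : F z = 0)
    -- `D` is the generator of the one-parameter group `A_t` of differentials at `z`
    (D : TangentSpace I z →L[ℝ] TangentSpace I z)
    (hD : ∀ t : ℝ, mfderiv I I (fun x => Φ x t) z = NormedSpace.exp (𝔸 := E →L[ℝ] E) (t • D)) :
    ∃ (k l : ℕ), 2 * k + l = Module.finrank ℝ E ∧
      ∃ a : Fin k → ℝ, (∀ j, a j ≠ 0) ∧
        ∃ b : Module.Basis ((Fin k ⊕ Fin k) ⊕ Fin l) ℝ (TangentSpace I z),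
          (∀ j : Fin k,
            D (b (Sum.inl (Sum.inl j))) = a j • b (Sum.inl (Sum.inr j)) ∧
            D (b (Sum.inl (Sum.inr j))) = -(a j) • b (Sum.inl (Sum.inl j))) ∧
          (∀ i : Fin l, D (b (Sum.inr i)) = 0) := by
  have hFz : F (Φ z (θ z)) = 0 := by rw [hθ_per, hz]
  have hstat : mfderiv 𝓘(ℝ, ℝ) I (Φ z) (θ z) = 0 :=
    ContinuousLinearMap.ext_ring ((hΦ_deriv z (θ z)).trans hFz)
  have hexp : NormedSpace.exp (𝔸 := E →L[ℝ] E) (θ z • D) = 1 := by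
    rw [← hD]
    exact mfderiv_apply_eq_id_of_apply_eq_self (hΦ_smooth.mdifferentiableAt (by simp))
      (hθ.mdifferentiableAt (by simp)) hθ_per hstat
  obtain ⟨k, l, hkl, a, b, hb⟩ :=
    (hasRotationBasis_of_exp_smul_eq_one (V := E) (hθ_pos z) hexp).exists_fin
  exact ⟨k, l, hkl, a, hb.ne_zero, b, fun j => ⟨hb.apply_inl_inl j, hb.apply_inl_inr j⟩,
    hb.apply_inr⟩

/-- Suppose `θ : M → (0,∞)` is smooth, strictly positive, with
`Φ(x, θ(x)) = x` for all `x`, let `z` be a singular point of `F` (`F z = 0`), and let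
`D` be the generator of the one-parameter group `A_t := mfderiv (x ↦ Φ(x,t))` at `z`,
i.e. `A_t = exp(t • D)` for all `t`.  Then there are `k, l ≥ 0` with `2k + l = dim M`,
nonzero reals `A₁, …, A_k`, and a basis of `T_zM` in which the matrix of `D` is
block-diagonal with `k` blocks `[[0, -A_j], [A_j, 0]]` and an `l × l` zero block;
equivalently, in suitable local coordinates the linear part of `F` at `z` is
`-A₁y₁ ∂/∂x₁ + A₁x₁ ∂/∂y₁ + ⋯ - A_k y_k ∂/∂x_k + A_k x_k ∂/∂y_k`. -/
theorem linear_part_of_periodic_field_at_singular_point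
    {E : Type*} [NormedAddCommGroup E] [NormedSpace ℝ E] [FiniteDimensional ℝ E]
    {H : Type*} [TopologicalSpace H] {I : ModelWithCorners ℝ E H}
    {M : Type*} [TopologicalSpace M] [ChartedSpace H M] [IsManifold I (⊤ : ℕ∞) M]
    -- the smooth vector field `F`
    (F : (x : M) → TangentSpace I x)
    (hF : ContMDiff I I.tangent (⊤ : ℕ∞) (fun x => (⟨x, F x⟩ : TangentBundle I M)))
    -- `Φ` is the global flow of `F`
    (Φ : M → ℝ → M)
    (hΦ_smooth : ContMDiff (I.prod 𝓘(ℝ, ℝ)) I (⊤ : ℕ∞) (fun p : M × ℝ => Φ p.1 p.2))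
    (hΦ_zero : ∀ x, Φ x 0 = x)
    (hΦ_add : ∀ x t s, Φ (Φ x t) s = Φ x (t + s))
    (hΦ_deriv : ∀ x t, mfderiv 𝓘(ℝ, ℝ) I (Φ x) t (1 : ℝ) = F (Φ x t))
    -- the smooth strictly positive period function `θ`
    (θ : M → ℝ) (hθ : ContMDiff I 𝓘(ℝ, ℝ) (⊤ : ℕ∞) θ) (hθ_pos : ∀ x, 0 < θ x)
    (hθ_per : ∀ x, Φ x (θ x) = x)
    -- a singular point `z` of `F`
    (z : M) (hz : F z = 0)
    -- `D` is the generator of the one-parameter group `A_t` of differentials at `z`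
    (D : TangentSpace I z →L[ℝ] TangentSpace I z)
    (hD : ∀ t : ℝ, mfderiv I I (fun x => Φ x t) z = NormedSpace.exp (𝔸 := E →L[ℝ] E) (t • D)) :
    ∃ (k l : ℕ), 2 * k + l = Module.finrank ℝ E ∧
      ∃ a : Fin k → ℝ, (∀ j, a j ≠ 0) ∧
        ∃ b : Module.Basis ((Fin k ⊕ Fin k) ⊕ Fin l) ℝ (TangentSpace I z),
          (∀ j : Fin k,
            D (b (Sum.inl (Sum.inl j))) = a j • b (Sum.inl (Sum.inr j)) ∧
            D (b (Sum.inl (Sum.inr j))) = -(a j) • b (Sum.inl (Sum.inl j))) ∧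
          (∀ i : Fin l, D (b (Sum.inr i)) = 0) :=
  linear_part_of_periodic_field_at_singular_point_general F Φ hΦ_smooth hΦ_deriv θ hθ hθ_pos hθ_per
    z hz D hD
end

section
/- Let Ψ : M × ℝ → M be a smooth flow on M (Ψ smooth, Ψ(x,0) = x, Ψ(Ψ(x,s),t) = Ψ(x,s+t)) such that Ψ(x,1) = x for all x ∈ M. Then there exists a smooth action Γ of the circle group S¹ (the group of complex numbers of norm 1) on M such that Γ(exp(2πit), x) = Ψ(x,t) for all x ∈ M and t ∈ ℝ, where exp(2πit) = e^{2πit} ∈ S¹. -/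
/-!
Periodicity lets each orbit `Ψ x` factor through `t ↦ exp (2πit)`, so
`Γ (z, x) = Ψ (x, arg z / 2π)` is well defined and is an action. Since `arg` is smooth off the
negative real axis, `Γ` is smooth near `{1} × M`; the identity `Γ (g, x) = Γ (g g₀⁻¹, Γ (g₀, x))`
then carries smoothness from `(1, Γ (g₀, x))` to any point `(g₀, x)`.
-/

open scoped Manifold Real

attribute [local instance] finrank_real_complex_fact'

section GroupAction

variable {𝕜 : Type*} [NontriviallyNormedField 𝕜] {n : WithTop ℕ∞}
  {E : Type*} [NormedAddCommGroup E] [NormedSpace 𝕜 E] {H : Type*} [TopologicalSpace H]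
  {I : ModelWithCorners 𝕜 E H} {M : Type*} [TopologicalSpace M] [ChartedSpace H M]
  {E' : Type*} [NormedAddCommGroup E'] [NormedSpace 𝕜 E'] {H' : Type*} [TopologicalSpace H']
  {I' : ModelWithCorners 𝕜 E' H'} {G : Type*} [TopologicalSpace G] [ChartedSpace H' G] [Group G]
  [ContMDiffMul I' n G]

theorem contMDiff_uncurry_of_contMDiffAt_one (Γ : G → M → M)
    (hmul : ∀ g h x, Γ (g * h) x = Γ g (Γ h x)) (hΓ : ∀ g, ContMDiff I I n (Γ g))
    (hone : ∀ x, ContMDiffAt (I'.prod I) I n (Function.uncurry Γ) (1, x)) :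
    ContMDiff (I'.prod I) I n (Function.uncurry Γ) := by
  rintro ⟨g₀, x₀⟩
  have hshift : Function.uncurry Γ =
      Function.uncurry Γ ∘ fun p : G × M => (p.1 * g₀⁻¹, Γ g₀ p.2) := by
    ext ⟨g, x⟩
    simp [← hmul]
  rw [hshift]
  refine ContMDiffAt.comp (g₀, x₀) ?_
    ((contMDiff_mul_right.comp contMDiff_fst).prodMk ((hΓ g₀).comp contMDiff_snd) _)
  simpa using hone (Γ g₀ x₀)

end GroupAction

namespace Circle

theorem contMDiffAt_arg {n : WithTop ℕ∞} {z : Circle} (hz : (z : ℂ) ∈ Complex.slitPlane) :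
    ContMDiffAt (𝓡 1) 𝓘(ℝ, ℝ) n (fun w : Circle => Complex.arg w) z := by
  have harg : ContDiffAt ℝ n Complex.arg z := by
    simpa only [Function.comp_def, Complex.imCLM_apply, Complex.log_im] using
      Complex.imCLM.contDiff.contDiffAt.comp _ ((Complex.contDiffAt_log hz).restrict_scalars ℝ)
  exact harg.contMDiffAt.comp z (contMDiff_coe_sphere z)

theorem exp_two_pi_mul_arg_div (z : Circle) : exp (2 * π * (Complex.arg z / (2 * π))) = z := by
  rw [mul_div_cancel₀ _ (by positivity), exp_arg]

noncomputable def periodicLift {α : Type*} (f : ℝ → α) (z : Circle) : α :=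
  f (Complex.arg z / (2 * π))

theorem periodicLift_exp {α : Type*} {f : ℝ → α} (hf : Function.Periodic f 1) (t : ℝ) :
    periodicLift f (exp (2 * π * t)) = f t := by
  obtain ⟨m, hm⟩ := exp_eq_exp.1 (exp_two_pi_mul_arg_div (exp (2 * π * t)))
  have ht : Complex.arg (exp (2 * π * t)) / (2 * π) = t + m * 1 := by
    field_simp at hm ⊢
    linarith
  rw [periodicLift, ht, hf.int_mul m t]

end Circle

theorem periodic_flow_induces_circle_action_general
    {E : Type*} [NormedAddCommGroup E] [NormedSpace ℝ E]
    {H : Type*} [TopologicalSpace H] {I : ModelWithCorners ℝ E H}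
    {M : Type*} [TopologicalSpace M] [ChartedSpace H M]
    -- `Ψ` is a smooth flow on `M`
    (Ψ : M → ℝ → M)
    (hΨ_smooth : ContMDiff (I.prod 𝓘(ℝ, ℝ)) I (⊤ : ℕ∞) (fun p : M × ℝ => Ψ p.1 p.2))
    (hΨ_zero : ∀ x, Ψ x 0 = x)
    (hΨ_add : ∀ x s t, Ψ (Ψ x s) t = Ψ x (s + t))
    -- `Ψ` is `1`-periodic
    (hΨ_per : ∀ x, Ψ x 1 = x) :
    ∃ Γ : Circle → M → M,
      -- `Γ` is a smooth map `S¹ × M → M`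
      ContMDiff ((𝓡 1).prod I) I (⊤ : ℕ∞) (fun p : Circle × M => Γ p.1 p.2) ∧
      -- `Γ` is an action of the group `S¹`
      (∀ x, Γ 1 x = x) ∧
      (∀ g h : Circle, ∀ x, Γ (g * h) x = Γ g (Γ h x)) ∧
      -- `Γ(e^{2πit}, x) = Ψ(x, t)`
      (∀ x : M, ∀ t : ℝ, Γ (Circle.exp (2 * π * t)) x = Ψ x t) := by
  have hper (x : M) : Function.Periodic (Ψ x) 1 := fun t => by rw [← hΨ_add, hΨ_per]
  set Γ : Circle → M → M := fun z x => Circle.periodicLift (Ψ x) z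
  have hΓ_exp (x : M) (t : ℝ) : Γ (Circle.exp (2 * π * t)) x = Ψ x t :=
    Circle.periodicLift_exp (hper x) t
  have hΓ_mul (g h : Circle) (x : M) : Γ (g * h) x = Γ g (Γ h x) := by
    rw [← Circle.exp_two_pi_mul_arg_div g, ← Circle.exp_two_pi_mul_arg_div h, ← Circle.exp_add,
      ← mul_add, hΓ_exp, hΓ_exp, hΓ_exp, hΨ_add, add_comm]
  have hΓ_smooth_at_one (x : M) :
      ContMDiffAt ((𝓡 1).prod I) I (⊤ : ℕ∞) (Function.uncurry Γ) (1, x) :=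
    (hΨ_smooth _).comp _ (contMDiffAt_snd.prodMk
      (((Circle.contMDiffAt_arg (by simp)).div_const _).comp _ contMDiffAt_fst))
  refine ⟨Γ, contMDiff_uncurry_of_contMDiffAt_one Γ hΓ_mul ?_ hΓ_smooth_at_one, ?_, hΓ_mul, hΓ_exp⟩
  · exact fun _ => hΨ_smooth.comp (contMDiff_id.prodMk contMDiff_const)
  · intro x
    simpa [hΨ_zero] using hΓ_exp x 0

/-- Let `Ψ : M × ℝ → M` be a smooth flow on `M` with `Ψ(x,1) = x` for
all `x`.  Then there is a smooth action `Γ` of the circle group `S¹` on `M` such that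
`Γ(exp(2πit), x) = Ψ(x,t)` for all `x ∈ M`, `t ∈ ℝ`. -/
theorem periodic_flow_induces_circle_action
    {E : Type*} [NormedAddCommGroup E] [NormedSpace ℝ E] [FiniteDimensional ℝ E]
    {H : Type*} [TopologicalSpace H] {I : ModelWithCorners ℝ E H}
    {M : Type*} [TopologicalSpace M] [ChartedSpace H M] [IsManifold I (⊤ : ℕ∞) M]
    -- `Ψ` is a smooth flow on `M`
    (Ψ : M → ℝ → M)
    (hΨ_smooth : ContMDiff (I.prod 𝓘(ℝ, ℝ)) I (⊤ : ℕ∞) (fun p : M × ℝ => Ψ p.1 p.2))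
    (hΨ_zero : ∀ x, Ψ x 0 = x)
    (hΨ_add : ∀ x s t, Ψ (Ψ x s) t = Ψ x (s + t))
    -- `Ψ` is `1`-periodic
    (hΨ_per : ∀ x, Ψ x 1 = x) :
    ∃ Γ : Circle → M → M,
      -- `Γ` is a smooth map `S¹ × M → M`
      ContMDiff ((𝓡 1).prod I) I (⊤ : ℕ∞) (fun p : Circle × M => Γ p.1 p.2) ∧
      -- `Γ` is an action of the group `S¹`
      (∀ x, Γ 1 x = x) ∧
      (∀ g h : Circle, ∀ x, Γ (g * h) x = Γ g (Γ h x)) ∧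
      -- `Γ(e^{2πit}, x) = Ψ(x, t)`
      (∀ x : M, ∀ t : ℝ, Γ (Circle.exp (2 * π * t)) x = Ψ x t) :=
  periodic_flow_induces_circle_action_general Ψ hΨ_smooth hΨ_zero hΨ_add hΨ_per
end
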